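/- Suppose x : [0,T) → ℝⁿ_{>0} is a solution of the Physarum dynamics ẋ = q − x. Then for every i ∈ {1,…,n} and every t ∈ [0,T), xᵢ(t) ≤ max(xᵢ(0), β), where β = 𝒟² · n · ‖b‖₁. -/

import Mathlib

open Matrix Filter Set Topology

/-- The real matrix obtained from an integer matrix by coercion of entries. -/
noncomputable def rmat {m n : ℕ} (A : Matrix (Fin m) (Fin n) ℤ) :
    Matrix (Fin m) (Fin n) ℝ :=
  A.map (Int.cast : ℤ → ℝ)

/-- The diagonal matrix `W = diag (x i / c i)`. -/
noncomputable def physW {n : ℕ} (c x : Fin n → ℝ) : Matrix (Fin n) (Fin n) ℝ :=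
  Matrix.diagonal (fun i => x i / c i)

/-- The Physarum vector `q = W Aᵀ L⁻¹ b` where `L = A W Aᵀ`. -/
noncomputable def physQ {m n : ℕ} (B : Matrix (Fin m) (Fin n) ℝ) (b : Fin m → ℝ)
    (c x : Fin n → ℝ) : Fin n → ℝ :=
  physW c x *ᵥ (Bᵀ *ᵥ ((B * physW c x * Bᵀ)⁻¹ *ᵥ b))

/-- The set of absolute values of determinants of square submatrices of `A` (as reals). -/
def subdets {m n : ℕ} (A : Matrix (Fin m) (Fin n) ℤ) : Set ℝ :=
  {d | ∃ (k : ℕ) (f : Fin k → Fin m) (g : Fin k → Fin n),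
    Function.Injective f ∧ Function.Injective g ∧
    d = |((A.submatrix f g).det : ℝ)|}

/-- `x` is a solution of the Physarum dynamics `ẋ = q - x` on the time set `s`,
staying in the positive orthant. -/
def IsPhysSolOn {m n : ℕ} (B : Matrix (Fin m) (Fin n) ℝ) (b : Fin m → ℝ)
    (c : Fin n → ℝ) (x : ℝ → Fin n → ℝ) (s : Set ℝ) : Prop :=
  ∀ t ∈ s, (∀ i, 0 < x t i) ∧ HasDerivWithinAt x (physQ B b c (x t) - x t) s t

/-!
Along the trajectory every `qᵢ` stays below `𝒟 ‖b‖₁ ≤ β`, so `(xᵢ - β) eᵗ` is antitone.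

The bound on `q` comes from Cauchy–Binet. With `L = A W Aᵀ` and `A_s` the columns of `A`
selected by `s : Fin m → Fin n`, one has `m! det L = ∑ₛ (∏ w_s) (det A_s)²`; the matrix
determinant lemma for the rank-one update `(A + b eᵢᵀ) W Aᵀ = L + b (eᵢᵀ W Aᵀ)` gives
`m! det L qᵢ = ∑ₛ (∏ w_s) det A_s (det (A + b eᵢᵀ)_s - det A_s)`. The last factor is the
determinant of `A_s` with one column replaced by `b`, at most `𝒟 ‖b‖₁` by Laplace expansion,
and `|det A_s| ≤ (det A_s)²` since `A` is integral.
-/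

section CommRing

variable {ι κ R : Type*} [Fintype ι] [DecidableEq ι] [Fintype κ] [CommRing R]

theorem Matrix.det_mul_eq_sum_prod_mul_det (M : Matrix ι κ R) (N : Matrix κ ι R) :
    (M * N).det = ∑ s : ι → κ, (∏ k, M k (s k)) * (N.submatrix s id).det := by
  have hrows : (M * N).det = (detRowAlternating (R := R) (n := ι)).toMultilinearMap
      (fun k => ∑ e, M k e • fun l => N e l) := by
    congr 1
    ext k l
    simp [Matrix.mul_apply, Finset.sum_apply]
  rw [hrows, MultilinearMap.map_sum]
  refine Finset.sum_congr rfl fun s _ => ?_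
  exact MultilinearMap.map_smul_univ _ (fun k => M k (s k)) (fun k => N (s k))

/-- Cauchy–Binet, summed over all column selections `s` rather than increasing ones: each
set of columns then appears `(card ι)!` times. -/
theorem Matrix.factorial_mul_det_mul (M : Matrix ι κ R) (N : Matrix κ ι R) :
    (Fintype.card ι).factorial * (M * N).det =
      ∑ s : ι → κ, (M.submatrix id s).det * (N.submatrix s id).det := by
  have hperm (σ : Equiv.Perm ι) : (M * N).det =
      ∑ s : ι → κ, (Equiv.Perm.sign σ : R) * (∏ k, M k (s (σ k))) * (N.submatrix s id).det := by
    rw [det_mul_eq_sum_prod_mul_det, ← (Equiv.arrowCongr σ.symm (Equiv.refl κ)).sum_comp]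
    refine Finset.sum_congr rfl fun s _ => ?_
    change (∏ k, M k (s (σ k))) * ((N.submatrix s id).submatrix σ id).det = _
    rw [det_permute]
    ring
  have hleib (s : ι → κ) : (M.submatrix id s).det =
      ∑ σ : Equiv.Perm ι, (Equiv.Perm.sign σ : R) * ∏ k, M k (s (σ k)) := by
    rw [← det_transpose, det_apply']
    rfl
  rw [← Fintype.card_perm, ← nsmul_eq_mul, ← Finset.card_univ, ← Finset.sum_const,
    Finset.sum_congr rfl fun σ _ => hperm σ, Finset.sum_comm]
  simp only [hleib, Finset.sum_mul]

theorem Matrix.det_add_vecMulVec_single (P : Matrix ι ι R) (u : ι → R) (l : ι) :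
    (P + vecMulVec u (Pi.single l 1)).det = P.det + (P.updateCol l u).det := by
  have hcol : P + vecMulVec u (Pi.single l 1) = P.updateCol l (Pᵀ l + u) := by
    ext r c
    rcases eq_or_ne c l with rfl | hc
    · simp [vecMulVec_apply]
    · simp [vecMulVec_apply, updateCol_ne hc, Pi.single_eq_of_ne hc]
  rw [hcol, det_updateCol_add]
  congr
  exact updateCol_eq_self P l

theorem Matrix.factorial_mul_det_mul_diagonal_mul_transpose [DecidableEq κ] (C B : Matrix ι κ R)
    (w : κ → R) :
    (Fintype.card ι).factorial * (C * diagonal w * Bᵀ).det =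
      ∑ s : ι → κ, (∏ k, w (s k)) * (C.submatrix id s).det * (B.submatrix id s).det := by
  rw [factorial_mul_det_mul]
  refine Finset.sum_congr rfl fun s _ => ?_
  have hCw : (C * diagonal w).submatrix id s = C.submatrix id s * diagonal (w ∘ s) := by
    ext r c
    simp
  rw [hCw, det_mul, det_diagonal, ← transpose_submatrix, det_transpose]
  simp only [Function.comp_apply]
  ring

end CommRing

section Field

variable {ι κ R : Type*} [Fintype ι] [DecidableEq ι] [Fintype κ] [DecidableEq κ] [Field R]

theorem Matrix.factorial_mul_det_mul_diagonal_mulVec_inv_mulVec_apply (B : Matrix ι κ R)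
    (w : κ → R) (b : ι → R) (i : κ) (hL : IsUnit (B * diagonal w * Bᵀ).det) :
    (Fintype.card ι).factorial * (B * diagonal w * Bᵀ).det *
        (diagonal w *ᵥ (Bᵀ *ᵥ ((B * diagonal w * Bᵀ)⁻¹ *ᵥ b))) i =
      ∑ s : ι → κ, (∏ k, w (s k)) * (B.submatrix id s).det *
        (((B + vecMulVec b (Pi.single i 1)).submatrix id s).det - (B.submatrix id s).det) := by
  set L := B * diagonal w * Bᵀ
  -- `(B + b eᵢᵀ) W Bᵀ = L + b (eᵢᵀ W Bᵀ)`: the matrix determinant lemma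
  have hdet : ((B + vecMulVec b (Pi.single i 1)) * diagonal w * Bᵀ).det =
      L.det * (1 + (diagonal w *ᵥ (Bᵀ *ᵥ (L⁻¹ *ᵥ b))) i) := by
    rw [Matrix.add_mul, Matrix.add_mul, vecMulVec_mul, vecMulVec_mul, vecMulVec_eq Unit,
      det_add_replicateCol_mul_replicateRow hL, det_unique (n := Unit), Matrix.mul_assoc,
      ← replicateCol_mulVec, Matrix.add_apply, one_apply_eq, replicateRow_mul_replicateCol_apply,
      ← single_one_dotProduct i (diagonal w *ᵥ _)]
    simp only [dotProduct_mulVec]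
  calc _ = (Fintype.card ι).factorial * ((B + vecMulVec b (Pi.single i 1)) * diagonal w * Bᵀ).det -
        (Fintype.card ι).factorial * L.det := by rw [hdet]; ring
    _ = _ := by
      rw [factorial_mul_det_mul_diagonal_mul_transpose,
        factorial_mul_det_mul_diagonal_mul_transpose, ← Finset.sum_sub_distrib]
      exact Finset.sum_congr rfl fun s _ => by ring

end Field

section IntegerMatrix

variable {m n : ℕ} (A : Matrix (Fin m) (Fin n) ℤ) {𝒟 : ℝ}

theorem det_rmat {k : ℕ} (M : Matrix (Fin k) (Fin k) ℤ) : (rmat M).det = M.det :=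
  (Int.cast_det M).symm

theorem abs_det_rmat_le_sq {k : ℕ} (M : Matrix (Fin k) (Fin k) ℤ) :
    |(rmat M).det| ≤ (rmat M).det ^ 2 := by
  rw [det_rmat, ← Int.cast_abs, ← Int.natCast_natAbs]
  exact_mod_cast Int.natAbs_le_self_sq M.det

theorem one_le_of_mem_upperBounds_subdets (hD : 𝒟 ∈ upperBounds (subdets A)) : 1 ≤ 𝒟 :=
  hD ⟨0, Fin.elim0, Fin.elim0, Function.injective_of_subsingleton _,
    Function.injective_of_subsingleton _, by simp⟩

theorem mul_sum_abs_nonneg_of_mem_upperBounds_subdets (hD : 𝒟 ∈ upperBounds (subdets A))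
    (b : Fin m → ℝ) : 0 ≤ 𝒟 * ∑ j, |b j| :=
  mul_nonneg (zero_le_one.trans (one_le_of_mem_upperBounds_subdets A hD))
    (Finset.sum_nonneg fun j _ => abs_nonneg (b j))

theorem abs_det_rmat_submatrix_le (hD : 𝒟 ∈ upperBounds (subdets A)) {k : ℕ}
    {f : Fin k → Fin m} {g : Fin k → Fin n} (hf : f.Injective) (hg : g.Injective) :
    |((rmat A).submatrix f g).det| ≤ 𝒟 :=
  hD ⟨k, f, g, hf, hg, by rw [← det_rmat]; rfl⟩

theorem abs_det_updateCol_rmat_submatrix_le (hD : 𝒟 ∈ upperBounds (subdets A))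
    {s : Fin m → Fin n} (hs : s.Injective) (l : Fin m) (u : Fin m → ℝ) :
    |(((rmat A).submatrix id s).updateCol l u).det| ≤ 𝒟 * ∑ j, |u j| := by
  cases m with
  | zero => exact l.elim0
  | succ m =>
    rw [det_succ_column _ l, Finset.mul_sum]
    refine (Finset.abs_sum_le_sum_abs _ _).trans (Finset.sum_le_sum fun r _ => ?_)
    have hminor : (((rmat A).submatrix id s).updateCol l u).submatrix r.succAbove l.succAbove =
        (rmat A).submatrix r.succAbove (s ∘ l.succAbove) := by
      ext a c
      simp
    rw [hminor, abs_mul, abs_mul, abs_pow, abs_neg, abs_one, one_pow, one_mul, updateCol_self,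
      mul_comm 𝒟]
    exact mul_le_mul_of_nonneg_left (abs_det_rmat_submatrix_le A hD Fin.succAbove_right_injective
      (hs.comp Fin.succAbove_right_injective)) (abs_nonneg _)

theorem abs_det_add_vecMulVec_single_sub_det_le (hD : 𝒟 ∈ upperBounds (subdets A))
    {s : Fin m → Fin n} (hs : s.Injective) (i : Fin n) (b : Fin m → ℝ) :
    |((rmat A + vecMulVec b (Pi.single i 1)).submatrix id s).det -
        ((rmat A).submatrix id s).det| ≤ 𝒟 * ∑ j, |b j| := by
  have hsplit : (rmat A + vecMulVec b (Pi.single i 1)).submatrix id s =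
      (rmat A).submatrix id s + vecMulVec b ((Pi.single i 1 : Fin n → ℝ) ∘ s) := by
    ext r c
    simp [vecMulVec_apply]
  rw [hsplit]
  by_cases hi : ∃ l, s l = i
  · obtain ⟨l, rfl⟩ := hi
    have hsingle : (Pi.single (s l) 1 : Fin n → ℝ) ∘ s = Pi.single l 1 := by
      funext l'
      simp [Pi.single_apply, hs.eq_iff]
    rw [hsingle, det_add_vecMulVec_single, add_sub_cancel_left]
    exact abs_det_updateCol_rmat_submatrix_le A hD hs l b
  · rw [not_exists] at hi
    have hzero : ((Pi.single i 1 : Fin n → ℝ) ∘ s) = 0 := by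
      funext l
      simp [hi l]
    rw [hzero, vecMulVec_zero, add_zero, sub_self, abs_zero]
    exact mul_sum_abs_nonneg_of_mem_upperBounds_subdets A hD b

theorem det_mul_det_add_vecMulVec_single_sub_det_le (hD : 𝒟 ∈ upperBounds (subdets A))
    (s : Fin m → Fin n) (i : Fin n) (b : Fin m → ℝ) :
    ((rmat A).submatrix id s).det * (((rmat A + vecMulVec b (Pi.single i 1)).submatrix id s).det -
        ((rmat A).submatrix id s).det) ≤ ((rmat A).submatrix id s).det ^ 2 * (𝒟 * ∑ j, |b j|) := by
  by_cases hs : s.Injective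
  · calc _ ≤ |((rmat A).submatrix id s).det| * |((rmat A + vecMulVec b (Pi.single i 1)).submatrix
            id s).det - ((rmat A).submatrix id s).det| := by rw [← abs_mul]; exact le_abs_self _
      _ ≤ |((rmat A).submatrix id s).det| * (𝒟 * ∑ j, |b j|) :=
          mul_le_mul_of_nonneg_left (abs_det_add_vecMulVec_single_sub_det_le A hD hs i b)
            (abs_nonneg _)
      _ ≤ _ := mul_le_mul_of_nonneg_right (abs_det_rmat_le_sq (A.submatrix id s))
          (mul_sum_abs_nonneg_of_mem_upperBounds_subdets A hD b)
  · obtain ⟨l, l', hss, hne⟩ : ∃ l l', s l = s l' ∧ l ≠ l' := by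
      simpa [Function.Injective] using hs
    have hzero : ((rmat A).submatrix id s).det = 0 :=
      det_zero_of_column_eq hne fun r => by simp [hss]
    simp [hzero]

theorem diagonal_mulVec_transpose_mulVec_inv_mulVec_apply_le
    (hD : 𝒟 ∈ upperBounds (subdets A)) (b : Fin m → ℝ) {w : Fin n → ℝ} (hw : ∀ e, 0 ≤ w e)
    (i : Fin n) :
    (diagonal w *ᵥ ((rmat A)ᵀ *ᵥ ((rmat A * diagonal w * (rmat A)ᵀ)⁻¹ *ᵥ b))) i ≤
      𝒟 * ∑ j, |b j| := by
  set L := rmat A * diagonal w * (rmat A)ᵀ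
  by_cases hL : IsUnit L.det
  swap
  · simpa [nonsing_inv_apply_not_isUnit _ hL] using
      mul_sum_abs_nonneg_of_mem_upperBounds_subdets A hD b
  have hprod : ∀ s : Fin m → Fin n, 0 ≤ ∏ k, w (s k) := fun s =>
    Finset.prod_nonneg fun k _ => hw (s k)
  have hfac : (0 : ℝ) < (Fintype.card (Fin m)).factorial := by positivity
  -- Cauchy–Binet: `m! det L` is a sum of squares with nonnegative weights
  have hLpos : 0 < L.det := by
    refine lt_of_le_of_ne (nonneg_of_mul_nonneg_right ?_ hfac) hL.ne_zero.symm
    rw [factorial_mul_det_mul_diagonal_mul_transpose]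
    exact Finset.sum_nonneg fun s _ => by
      rw [mul_assoc]
      exact mul_nonneg (hprod s) (mul_self_nonneg _)
  refine le_of_mul_le_mul_left ?_ (mul_pos hfac hLpos)
  rw [factorial_mul_det_mul_diagonal_mulVec_inv_mulVec_apply _ _ _ _ hL]
  calc _ ≤ ∑ s : Fin m → Fin n, (∏ k, w (s k)) * (((rmat A).submatrix id s).det ^ 2 *
          (𝒟 * ∑ j, |b j|)) :=
        Finset.sum_le_sum fun s _ => by
          rw [mul_assoc]
          exact mul_le_mul_of_nonneg_left
            (det_mul_det_add_vecMulVec_single_sub_det_le A hD s i b) (hprod s)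
    _ = _ := by
      rw [mul_comm _ (𝒟 * _), factorial_mul_det_mul_diagonal_mul_transpose,
        Finset.mul_sum _ _ (𝒟 * ∑ j, |b j|)]
      exact Finset.sum_congr rfl fun s _ => by ring

theorem physQ_rmat_apply_le (hD : 𝒟 ∈ upperBounds (subdets A)) (b : Fin m → ℝ)
    {c x : Fin n → ℝ} (hc : ∀ e, 0 ≤ c e) (hx : ∀ e, 0 ≤ x e) (i : Fin n) :
    physQ (rmat A) b c x i ≤ 𝒟 * ∑ j, |b j| :=
  diagonal_mulVec_transpose_mulVec_inv_mulVec_apply_le A hD b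
    (fun e => div_nonneg (hx e) (hc e)) i

end IntegerMatrix

theorem le_max_of_hasDerivWithinAt_sub_self {f g : ℝ → ℝ} {s : Set ℝ} {β : ℝ}
    (hs : Convex ℝ s) (hf : ∀ t ∈ s, HasDerivWithinAt f (g t - f t) s t)
    (hg : ∀ t ∈ s, g t ≤ β) {t₀ t : ℝ} (ht₀ : t₀ ∈ s) (ht : t ∈ s) (hle : t₀ ≤ t) :
    f t ≤ max (f t₀) β := by
  -- `(f - β) * exp` has derivative `(g - β) * exp ≤ 0`
  have hanti : AntitoneOn (fun u => (f u - β) * Real.exp u) s := by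
    refine antitoneOn_of_hasDerivWithinAt_nonpos (f' := fun u => (g u - β) * Real.exp u) hs
      (fun u hu => ((hf u hu).continuousWithinAt.sub continuousWithinAt_const).mul
        (Real.continuous_exp.continuousWithinAt)) (fun u hu => ?_) (fun u hu => ?_)
    · have hu' := interior_subset hu
      exact ((((hf u hu').mono interior_subset).sub_const β).mul
        (Real.hasDerivAt_exp u).hasDerivWithinAt).congr_deriv (by ring)
    · exact mul_nonpos_of_nonpos_of_nonneg (sub_nonpos.2 (hg u (interior_subset hu)))
        (Real.exp_pos u).le
  have hdecr : (f t - β) * Real.exp t ≤ (f t₀ - β) * Real.exp t₀ := hanti ht₀ ht hle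
  rcases le_or_gt (f t) β with hβ | hβ
  · exact le_max_of_le_right hβ
  · refine le_max_of_le_left ?_
    have hexp := Real.exp_le_exp.2 hle
    nlinarith [Real.exp_pos t₀]

theorem physarum_trajectory_bounded_general {m n : ℕ} (A : Matrix (Fin m) (Fin n) ℤ)
    (𝒟 : ℝ) (hD : IsGreatest (subdets A) 𝒟)
    (b : Fin m → ℤ) (c : Fin n → ℤ) (hc : ∀ i, 0 < c i)
    (T : ℝ) (x : ℝ → Fin n → ℝ)
    (hsol : IsPhysSolOn (rmat A) (fun j => (b j : ℝ)) (fun i => (c i : ℝ)) x (Set.Ico 0 T)) :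
    ∀ i, ∀ t ∈ Set.Ico (0 : ℝ) T,
      x t i ≤ max (x 0 i) (𝒟 ^ 2 * n * ∑ j, |(b j : ℝ)|) := by
  intro i t ht
  have hDn : 𝒟 ≤ 𝒟 ^ 2 * n := by
    have hD1 := one_le_of_mem_upperBounds_subdets A hD.2
    have hn : (1 : ℝ) ≤ n := by exact_mod_cast i.pos
    nlinarith
  have hq : ∀ u ∈ Set.Ico (0 : ℝ) T,
      physQ (rmat A) (fun j => (b j : ℝ)) (fun e => (c e : ℝ)) (x u) i ≤
        𝒟 ^ 2 * n * ∑ j, |(b j : ℝ)| := fun u hu =>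
    (physQ_rmat_apply_le A hD.2 _ (fun e => by exact_mod_cast (hc e).le)
      (fun e => ((hsol u hu).1 e).le) i).trans
      (mul_le_mul_of_nonneg_right hDn (Finset.sum_nonneg fun j _ => abs_nonneg _))
  exact le_max_of_hasDerivWithinAt_sub_self (convex_Ico 0 T)
    (fun u hu => hasDerivWithinAt_pi.1 (hsol u hu).2 i) hq ⟨le_rfl, ht.1.trans_lt ht.2⟩ ht ht.1

theorem physarum_trajectory_bounded {m n : ℕ} (A : Matrix (Fin m) (Fin n) ℤ)
    (hrank : (rmat A).rank = m)
    (𝒟 : ℝ) (hD : IsGreatest (subdets A) 𝒟)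
    (b : Fin m → ℤ) (c : Fin n → ℤ) (hc : ∀ i, 0 < c i)
    (hfeas : ∃ y : Fin n → ℝ, (rmat A *ᵥ y = fun j => (b j : ℝ)) ∧ ∀ i, 0 ≤ y i)
    (T : ℝ) (hT : 0 < T) (x : ℝ → Fin n → ℝ)
    (hsol : IsPhysSolOn (rmat A) (fun j => (b j : ℝ)) (fun i => (c i : ℝ)) x (Set.Ico 0 T)) :
    ∀ i, ∀ t ∈ Set.Ico (0 : ℝ) T,
      x t i ≤ max (x 0 i) (𝒟 ^ 2 * n * ∑ j, |(b j : ℝ)|) :=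
  physarum_trajectory_bounded_general A 𝒟 hD b c hc T x hsol
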